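/- Let k be a field of characteristic zero, n > 1, λ ∈ k a primitive n-th root of unity, and let P = MvPolynomial (Fin m) k carry a linear Taft action datum (g, x) (the Poisson bracket plays no role here: g is the algebra automorphism with g(u₁) = λ⁻¹u₁, g(uᵢ) = uᵢ for i > 1, and x is the k-linear map with x(u₁) = u₂, x(uᵢ) = 0 for i > 1 and x(a*b) = g(a)*x(b) + x(a)*b). Then the invariant ring of the action equals the subalgebra generated by u₁ⁿ, u₂, …, u_m: {p ∈ P : g(p) = p and x(p) = 0} = Algebra.adjoin k {u₁ⁿ, u₂, …, u_m}. -/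
import Mathlib


open MvPolynomial

/-- The invariant ring of the standard linear Taft action on `k[u₁,…,u_m]` is
`k[u₁ⁿ, u₂, …, u_m]`. -/
theorem taft_invariants {k : Type*} [Field k] [CharZero k]
    {m : ℕ} (hm : 2 ≤ m)
    {n : ℕ} (hn : 1 < n) {lam : k} (hlam : IsPrimitiveRoot lam n)
    (g : MvPolynomial (Fin m) k ≃ₐ[k] MvPolynomial (Fin m) k)
    (hg0 : g (X ⟨0, by omega⟩) = lam⁻¹ • X ⟨0, by omega⟩)
    (hgi : ∀ i : Fin m, i.val ≠ 0 → g (X i) = X i)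
    (x : MvPolynomial (Fin m) k →ₗ[k] MvPolynomial (Fin m) k)
    (hx0 : x (X ⟨0, by omega⟩) = X ⟨1, by omega⟩)
    (hxi : ∀ i : Fin m, i.val ≠ 0 → x (X i) = 0)
    (hx_mul : ∀ a b, x (a * b) = g a * x b + x a * b) :
    {p : MvPolynomial (Fin m) k | g p = p ∧ x p = 0} =
      (Algebra.adjoin k
        ({q : MvPolynomial (Fin m) k |
          q = X ⟨0, by omega⟩ ^ n ∨ ∃ i : Fin m, i.val ≠ 0 ∧ q = X i}) :
        Subalgebra k (MvPolynomial (Fin m) k)) := by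
  have hm0 : 0 < m := by omega
  have hm1 : 1 < m := by omega
  set i0 : Fin m := ⟨0, hm0⟩ with hi0def
  set i1 : Fin m := ⟨1, hm1⟩ with hi1def
  have hg0' : g (X i0) = lam⁻¹ • X i0 := hg0
  have hgen1 : (X i0 ^ n : MvPolynomial (Fin m) k) ∈
      ({q : MvPolynomial (Fin m) k |
        q = X i0 ^ n ∨ ∃ i : Fin m, i.val ≠ 0 ∧ q = X i}) := Or.inl rfl
  have hgen2 : ∀ i : Fin m, i.val ≠ 0 → (X i : MvPolynomial (Fin m) k) ∈
      ({q : MvPolynomial (Fin m) k |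
        q = X i0 ^ n ∨ ∃ i : Fin m, i.val ≠ 0 ∧ q = X i}) :=
    fun i hi => Or.inr ⟨i, hi, rfl⟩
  have hx0' : x (X i0) = X i1 := hx0
  -- basic facts
  have hx1 : x (1 : MvPolynomial (Fin m) k) = 0 := by
    have h := hx_mul 1 1
    simp only [mul_one, one_mul, map_one] at h
    exact (left_eq_add.mp h)
  have hxC : ∀ c : k, x (C c) = 0 := by
    intro c
    rw [show (C c : MvPolynomial (Fin m) k) = c • 1 by rw [smul_eq_C_mul, mul_one],
      map_smul, hx1, smul_zero]
  have hgC : ∀ c : k, g (C c) = C c := by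
    intro c
    have h := g.commutes c
    rwa [algebraMap_eq] at h
  have hlamn : lam ^ n = 1 := hlam.pow_eq_one
  have hinvn : lam⁻¹ ^ n = 1 := by rw [inv_pow, hlamn, inv_one]
  -- x on powers of X i0
  have hxpow : ∀ d : ℕ, x (X i0 ^ (d + 1)) =
      (∑ j ∈ Finset.range (d + 1), lam⁻¹ ^ j) • (X i1 * X i0 ^ d) := by
    intro d
    induction d with
    | zero => simp [hx0']
    | succ d ih =>
      have h := hx_mul (X i0) (X i0 ^ (d + 1))
      rw [← pow_succ'] at h
      have hS : (∑ j ∈ Finset.range (d + 1 + 1), lam⁻¹ ^ j)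
          = lam⁻¹ * (∑ j ∈ Finset.range (d + 1), lam⁻¹ ^ j) + 1 := by
        rw [Finset.sum_range_succ', Finset.mul_sum, pow_zero]
        simp [pow_succ']
      rw [h, ih, hg0', hx0', hS]
      rw [smul_eq_C_mul, smul_eq_C_mul, smul_eq_C_mul, map_add, map_mul, map_one]
      ring
  have hxX0n : x (X i0 ^ n) = 0 := by
    obtain ⟨d, rfl⟩ : ∃ d, n = d + 1 := ⟨n - 1, by omega⟩
    rw [hxpow d, hlam.inv.geom_sum_eq_zero hn, zero_smul]
  -- g on monomials
  have hgmono : ∀ (s : Fin m →₀ ℕ) (c : k),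
      g (monomial s c) = C (lam⁻¹ ^ s i0) * monomial s c := by
    intro s c
    rw [monomial_eq, map_mul, hgC, Finsupp.prod, map_prod]
    have hfac : ∀ i ∈ s.support,
        g (X i ^ s i) = C (if i = i0 then lam⁻¹ ^ s i else 1) * X i ^ s i := by
      intro i _
      by_cases h : i = i0
      · subst h
        rw [map_pow, hg0', smul_pow, if_pos rfl, smul_eq_C_mul]
      · rw [map_pow, hgi i (fun hv => h (Fin.ext hv)), if_neg h, map_one, one_mul]
    rw [Finset.prod_congr rfl hfac, Finset.prod_mul_distrib]
    have hp : (∏ i ∈ s.support, (if i = i0 then lam⁻¹ ^ s i else 1)) = lam⁻¹ ^ s i0 := by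
      rw [Finset.prod_ite_eq' s.support i0 (fun i => lam⁻¹ ^ s i)]
      by_cases h : i0 ∈ s.support
      · rw [if_pos h]
      · rw [if_neg h, Finsupp.notMem_support_iff.mp h, pow_zero]
    have hp2 : (∏ i ∈ s.support,
        (C (if i = i0 then lam⁻¹ ^ s i else 1) : MvPolynomial (Fin m) k))
        = C (lam⁻¹ ^ s i0) := by
      rw [← map_prod C (fun i => if i = i0 then lam⁻¹ ^ s i else 1) s.support, hp]
    rw [hp2]
    ring
  -- coefficient formula for g
  have hcoeff : ∀ (p : MvPolynomial (Fin m) k) (t : Fin m →₀ ℕ),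
      coeff t (g p) = lam⁻¹ ^ t i0 * coeff t p := by
    intro p t
    conv_lhs => rw [p.as_sum]
    rw [map_sum, coeff_sum]
    simp only [hgmono, coeff_C_mul, coeff_monomial, mul_ite, mul_zero]
    rw [Finset.sum_ite_eq' p.support t (fun s => lam⁻¹ ^ s i0 * coeff s p)]
    by_cases h : t ∈ p.support
    · rw [if_pos h]
    · rw [if_neg h, notMem_support_iff.mp h, mul_zero]
  -- the invariant set as a subalgebra
  let S : Subalgebra k (MvPolynomial (Fin m) k) :=
    { carrier := {p : MvPolynomial (Fin m) k | g p = p ∧ x p = 0}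
      mul_mem' := fun {a b} ha hb =>
        ⟨by rw [map_mul, ha.1, hb.1],
         by rw [hx_mul, ha.2, hb.2, mul_zero, zero_mul, add_zero]⟩
      one_mem' := ⟨map_one g, hx1⟩
      add_mem' := fun {a b} ha hb =>
        ⟨by rw [map_add, ha.1, hb.1], by rw [map_add, ha.2, hb.2, add_zero]⟩
      zero_mem' := ⟨map_zero g, map_zero x⟩
      algebraMap_mem' := fun c => ⟨by rw [algebraMap_eq]; exact hgC c,
        by rw [algebraMap_eq]; exact hxC c⟩ }
  have hle : Algebra.adjoin k
      ({q : MvPolynomial (Fin m) k |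
        q = X ⟨0, by omega⟩ ^ n ∨ ∃ i : Fin m, i.val ≠ 0 ∧ q = X i}) ≤ S := by
    apply Algebra.adjoin_le
    rintro q (rfl | ⟨i, hi, rfl⟩)
    · exact ⟨by rw [map_pow, hg0', smul_pow, hinvn, one_smul], hxX0n⟩
    · exact ⟨hgi i hi, hxi i hi⟩
  ext p
  constructor
  · rintro ⟨hgp, -⟩
    show p ∈ Algebra.adjoin k
      ({q : MvPolynomial (Fin m) k |
        q = X i0 ^ n ∨ ∃ i : Fin m, i.val ≠ 0 ∧ q = X i})
    rw [p.as_sum]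
    refine Subalgebra.sum_mem _ (fun s hs => ?_)
    have hdvd : n ∣ s i0 := by
      have h1 : lam⁻¹ ^ s i0 * coeff s p = coeff s p := by
        rw [← hcoeff p s, hgp]
      have hc : coeff s p ≠ 0 := mem_support_iff.mp hs
      have h2 : lam⁻¹ ^ s i0 = 1 :=
        mul_right_cancel₀ hc (h1.trans (one_mul (coeff s p)).symm)
      rw [inv_pow] at h2
      exact hlam.dvd_of_pow_eq_one _ (inv_eq_one.mp h2)
    obtain ⟨j, hj⟩ := hdvd
    rw [monomial_eq]
    apply mul_mem
    · rw [← algebraMap_eq]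
      exact Subalgebra.algebraMap_mem _ _
    · rw [Finsupp.prod]
      refine Subalgebra.prod_mem _ (fun i _ => ?_)
      by_cases h : i = i0
      · subst h
        rw [hj, pow_mul]
        exact pow_mem (Algebra.subset_adjoin hgen1) j
      · exact pow_mem
          (Algebra.subset_adjoin (hgen2 i (fun hv => h (Fin.ext hv)))) _
  · intro hp
    exact hle hp
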